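/- Let P be the Type A_n root poset with rank function rk(i,j) = i+j−(n+1). The rank-alternating order ideal cardinality statistic I ↦ Σ_{p∈I} (−1)^{rk(p)} equals n/2 plus an ℝ-linear combination of the signed toggleability statistics T_p; hence its average along any rowmotion orbit is n/2. -/

import Mathlib

set_option linter.all false


open scoped Classical
open Finset

variable {P : Type*} [Fintype P] [PartialOrder P]

/-- `I` is an order ideal (downward-closed subset) of the finite poset `P`. -/
def IsIdeal (I : Finset P) : Prop := ∀ ⦃x y : P⦄, x ≤ y → y ∈ I → x ∈ I

/-- `p` is a minimal element of the complement `P \ I`. -/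
def CanTogIn (I : Finset P) (p : P) : Prop := p ∉ I ∧ ∀ q, q < p → q ∈ I

/-- `p` is a maximal element of `I`. -/
def CanTogOut (I : Finset P) (p : P) : Prop := p ∈ I ∧ ∀ q, p < q → q ∉ I

/-- Rowmotion: the order ideal generated by the minimal elements of `P \ I`. -/
noncomputable def rowmotion (I : Finset P) : Finset P :=
  univ.filter fun x => ∃ y, CanTogIn I y ∧ x ≤ y

/-- Toggleability statistic `T⁺_p`. -/
noncomputable def Tin (p : P) (I : Finset P) : ℝ := if CanTogIn I p then 1 else 0

/-- Toggleability statistic `T⁻_p`. -/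
noncomputable def Tout (p : P) (I : Finset P) : ℝ := if CanTogOut I p then 1 else 0

/-- Signed toggleability statistic `T_p = T⁺_p - T⁻_p`. -/
noncomputable def Tsgn (p : P) (I : Finset P) : ℝ := Tin p I - Tout p I

/-- The Type `A_n` root poset, realized as `{(i,j) : 1 ≤ i,j ≤ n, i+j ≥ n+1}`
with componentwise order (coordinates taken in `Fin (n+1)`, i.e. `0,…,n`). -/
abbrev RootA (n : ℕ) :=
  {p : Fin (n + 1) × Fin (n + 1) // 1 ≤ p.1.val ∧ 1 ≤ p.2.val ∧ n + 1 ≤ p.1.val + p.2.val}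

lemma rowmotion_isIdeal (I : Finset P) : IsIdeal (rowmotion I) := by
  intro x y hxy hy
  simp only [rowmotion, mem_filter, mem_univ, true_and] at hy ⊢
  obtain ⟨z, hz, hyz⟩ := hy
  exact ⟨z, hz, hxy.trans hyz⟩

lemma canTogOut_rowmotion (I : Finset P) (p : P) :
    CanTogOut (rowmotion I) p ↔ CanTogIn I p := by
  constructor
  · rintro ⟨hp, hmax⟩
    simp only [rowmotion, mem_filter, mem_univ, true_and] at hp
    obtain ⟨y, hy, hpy⟩ := hp
    rcases eq_or_lt_of_le hpy with rfl | hlt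
    · exact hy
    · exact absurd (by simp [rowmotion, mem_filter]; exact ⟨y, hy, le_refl y⟩) (hmax y hlt)
  · rintro ⟨hp, hmin⟩
    refine ⟨by simp only [rowmotion, mem_filter, mem_univ, true_and]; exact ⟨p, ⟨hp, hmin⟩, le_refl p⟩, ?_⟩
    intro q hq hqmem
    simp only [rowmotion, mem_filter, mem_univ, true_and] at hqmem
    obtain ⟨y, hy, hqy⟩ := hqmem
    exact hp (hy.2 p (lt_of_lt_of_le hq hqy))

lemma sum_Tsgn_orbit (I : Finset P) (p : P) (N : ℕ) (hper : rowmotion^[N] I = I) :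
    ∑ k ∈ Finset.range N, Tsgn p (rowmotion^[k] I) = 0 := by
  have key : ∀ k, Tsgn p (rowmotion^[k] I)
      = Tout p (rowmotion^[k+1] I) - Tout p (rowmotion^[k] I) := by
    intro k
    have : Tin p (rowmotion^[k] I) = Tout p (rowmotion^[k+1] I) := by
      rw [Function.iterate_succ_apply']
      simp [Tin, Tout, canTogOut_rowmotion]
    simp [Tsgn, this]
  simp only [key]
  rw [Finset.sum_range_sub (fun k => Tout p (rowmotion^[k] I))]
  simp [hper]

namespace RootAProof
variable {n : ℕ}

lemma le_iff (p q : RootA n) : p ≤ q ↔ p.1.1.val ≤ q.1.1.val ∧ p.1.2.val ≤ q.1.2.val := by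
  rw [← Subtype.coe_le_coe, Prod.le_def, Fin.le_def, Fin.le_def]

lemma eq_iff (p q : RootA n) : p = q ↔ p.1.1.val = q.1.1.val ∧ p.1.2.val = q.1.2.val := by
  rw [Subtype.ext_iff, Prod.ext_iff, Fin.ext_iff, Fin.ext_iff]

lemma lt_iff (p q : RootA n) : p < q ↔
    (p.1.1.val ≤ q.1.1.val ∧ p.1.2.val ≤ q.1.2.val ∧
      ¬(p.1.1.val = q.1.1.val ∧ p.1.2.val = q.1.2.val)) := by
  rw [lt_iff_le_and_ne, le_iff, Ne, eq_iff]; tauto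

lemma bounds (p : RootA n) : 1 ≤ p.1.1.val ∧ 1 ≤ p.1.2.val ∧ n + 1 ≤ p.1.1.val + p.1.2.val
    ∧ p.1.1.val ≤ n ∧ p.1.2.val ≤ n :=
  ⟨p.2.1, p.2.2.1, p.2.2.2, Nat.lt_succ_iff.mp p.1.1.isLt, Nat.lt_succ_iff.mp p.1.2.isLt⟩

def rmk (n : ℕ) (i j : ℕ) (h : 1 ≤ i ∧ 1 ≤ j ∧ n + 1 ≤ i + j ∧ i ≤ n ∧ j ≤ n) : RootA n :=
  ⟨(⟨i, by omega⟩, ⟨j, by omega⟩), h.1, h.2.1, h.2.2.1⟩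

@[simp] lemma rmk_i (i j : ℕ) (h) : ((rmk n i j h).1.1 : Fin (n+1)).val = i := rfl
@[simp] lemma rmk_j (i j : ℕ) (h) : ((rmk n i j h).1.2 : Fin (n+1)).val = j := rfl

variable {I : Finset (RootA n)} {p q : RootA n}

lemma canTogIn_insert (hq : q ≠ p) (h : CanTogIn I q) : CanTogIn (insert p I) q :=
  ⟨by simp [Finset.mem_insert, hq, h.1], fun r hr => mem_insert_of_mem (h.2 r hr)⟩

lemma canTogOut_of_insert (hq : q ≠ p) (h : CanTogOut (insert p I) q) : CanTogOut I q :=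
  ⟨(mem_insert.mp h.1).resolve_left hq, fun r hr hrI => h.2 r hr (mem_insert_of_mem hrI)⟩

lemma flipIn (hI : IsIdeal I) (hp : CanTogIn I p) (hq : q ≠ p)
    (h1 : CanTogIn (insert p I) q) (h2 : ¬ CanTogIn I q) :
    p ≤ q ∧ q.1.1.val + q.1.2.val = p.1.1.val + p.1.2.val + 1 := by
  obtain ⟨hqmem, hall⟩ := h1
  have hqI : q ∉ I := fun h => hqmem (mem_insert_of_mem h)
  have hex : ∃ r, r < q ∧ r ∉ I := by
    by_contra hcon; push_neg at hcon; exact h2 ⟨hqI, fun r hr => hcon r hr⟩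
  obtain ⟨r, hrq, hrI⟩ := hex
  have hrp : r = p := by
    rcases mem_insert.mp (hall r hrq) with h | h
    · exact h
    · exact absurd h hrI
  subst hrp
  obtain ⟨hp1, hp2, hps, hp1n, hp2n⟩ := bounds r
  obtain ⟨hq1, hq2, hqs, hq1n, hq2n⟩ := bounds q
  have hco := (lt_iff r q).mp hrq
  refine ⟨le_of_lt hrq, ?_⟩
  by_contra hsum
  have hinter : ∃ s : RootA n, s < q ∧ r ≤ s ∧ s ≠ r := by
    by_cases hc : r.1.1.val < q.1.1.val
    · refine ⟨rmk n (q.1.1.val - 1) (q.1.2.val) (by omega), ?_, ?_, ?_⟩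
      · rw [lt_iff]; simp only [rmk_i, rmk_j]; omega
      · rw [le_iff]; simp only [rmk_i, rmk_j]; omega
      · rw [Ne, eq_iff]; simp only [rmk_i, rmk_j]; omega
    · refine ⟨rmk n (q.1.1.val) (q.1.2.val - 1) (by omega), ?_, ?_, ?_⟩
      · rw [lt_iff]; simp only [rmk_i, rmk_j]; omega
      · rw [le_iff]; simp only [rmk_i, rmk_j]; omega
      · rw [Ne, eq_iff]; simp only [rmk_i, rmk_j]; omega
  obtain ⟨s, hsq, hps, hsne⟩ := hinter
  have hsI : s ∈ I := (mem_insert.mp (hall s hsq)).resolve_left hsne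
  exact hp.1 (hI hps hsI)

lemma flipOut (hI : IsIdeal I) (hp : CanTogIn I p) (hq : q ≠ p)
    (h1 : CanTogOut I q) (h2 : ¬ CanTogOut (insert p I) q) :
    q ≤ p ∧ p.1.1.val + p.1.2.val = q.1.1.val + q.1.2.val + 1 := by
  obtain ⟨hqI, hmax⟩ := h1
  have hex : ∃ r, q < r ∧ r ∈ insert p I := by
    by_contra hcon; push_neg at hcon
    exact h2 ⟨mem_insert_of_mem hqI, hcon⟩
  obtain ⟨r, hqr, hrmem⟩ := hex
  have hrp : r = p := by
    rcases mem_insert.mp hrmem with h | h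
    · exact h
    · exact absurd h (hmax r hqr)
  subst hrp
  obtain ⟨hp1, hp2, hps, hp1n, hp2n⟩ := bounds r
  obtain ⟨hq1, hq2, hqs, hq1n, hq2n⟩ := bounds q
  have hco := (lt_iff q r).mp hqr
  refine ⟨le_of_lt hqr, ?_⟩
  by_contra hsum
  have hinter : ∃ s : RootA n, s < r ∧ q < s := by
    by_cases hc : q.1.1.val < r.1.1.val
    · refine ⟨rmk n (r.1.1.val - 1) (r.1.2.val) (by omega), ?_, ?_⟩
      · rw [lt_iff]; simp only [rmk_i, rmk_j]; omega
      · rw [lt_iff]; simp only [rmk_i, rmk_j]; omega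
    · refine ⟨rmk n (r.1.1.val) (r.1.2.val - 1) (by omega), ?_, ?_⟩
      · rw [lt_iff]; simp only [rmk_i, rmk_j]; omega
      · rw [lt_iff]; simp only [rmk_i, rmk_j]; omega
  obtain ⟨s, hsp, hqsl⟩ := hinter
  exact hmax s hqsl (hp.2 s hsp)

lemma tsgn_change (hI : IsIdeal I) (hp : CanTogIn I p) (hq : q ≠ p)
    (h : Tsgn q (insert p I) ≠ Tsgn q I) :
    (p ≤ q ∧ q.1.1.val + q.1.2.val = p.1.1.val + p.1.2.val + 1) ∨
    (q ≤ p ∧ p.1.1.val + p.1.2.val = q.1.1.val + q.1.2.val + 1) := by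
  by_cases hin : CanTogIn (insert p I) q ↔ CanTogIn I q
  · by_cases hout : CanTogOut (insert p I) q ↔ CanTogOut I q
    · exact absurd (by simp [Tsgn, Tin, Tout, hin, hout]) h
    · right
      have himp : CanTogOut (insert p I) q → CanTogOut I q := canTogOut_of_insert hq
      have h1 : CanTogOut I q := by
        by_contra hc
        exact hout ⟨himp, fun a => absurd a hc⟩
      have h2 : ¬ CanTogOut (insert p I) q := fun a => hout ⟨fun _ => himp a, fun _ => a⟩
      exact flipOut hI hp hq h1 h2
  · left
    have himp : CanTogIn I q → CanTogIn (insert p I) q := canTogIn_insert hq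
    have h1 : CanTogIn (insert p I) q := by
      by_contra hc
      exact hin ⟨fun a => absurd a hc, himp⟩
    have h2 : ¬ CanTogIn I q := fun a => hin ⟨fun _ => a, fun _ => himp a⟩
    exact flipIn hI hp hq h1 h2

lemma tsgn_self (hI : IsIdeal I) (hp : CanTogIn I p) :
    Tsgn p (insert p I) - Tsgn p I = -2 := by
  have t1 : Tin p I = 1 := by simp [Tin, hp]
  have t2 : Tout p I = 0 := by simp [Tout, CanTogOut, hp.1]
  have t3 : Tin p (insert p I) = 0 := by
    have : ¬ CanTogIn (insert p I) p := fun h => h.1 (mem_insert_self p I)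
    simp [Tin, this]
  have t4 : Tout p (insert p I) = 1 := by
    have : CanTogOut (insert p I) p := by
      refine ⟨mem_insert_self p I, fun r hr hrmem => ?_⟩
      rcases mem_insert.mp hrmem with h | h
      · exact absurd h (ne_of_gt hr)
      · exact hp.1 (hI (le_of_lt hr) h)
    simp [Tout, this]
  rw [Tsgn, Tsgn, t1, t2, t3, t4]; ring

/-- Change at upper cover `u = (i+1, j)`, with `w = (i+1, j-1)`, when `i < n`, `2 ≤ j`. -/
lemma tsgn_u1 (hI : IsIdeal I) (hp : CanTogIn I p) {u w : RootA n}
    (hu : u.1.1.val = p.1.1.val + 1 ∧ u.1.2.val = p.1.2.val)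
    (hw : w.1.1.val = p.1.1.val + 1 ∧ w.1.2.val = p.1.2.val - 1)
    (hj : 2 ≤ p.1.2.val) :
    Tsgn u (insert p I) - Tsgn u I = if w ∈ I then 1 else 0 := by
  obtain ⟨hp1, hp2, hps, hp1n, hp2n⟩ := bounds p
  have hpu : p < u := by rw [lt_iff]; omega
  have hune : u ≠ p := by rw [Ne, eq_iff]; omega
  have huI : u ∉ I := fun h => hp.1 (hI (le_of_lt hpu) h)
  have huins : u ∉ insert p I := by
    rw [mem_insert]; push_neg; exact ⟨hune, huI⟩
  have t1 : Tout u I = 0 := by simp [Tout, CanTogOut, huI]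
  have t2 : Tout u (insert p I) = 0 := by simp [Tout, CanTogOut, huins]
  have t3 : Tin u I = 0 := by
    have : ¬ CanTogIn I u := fun h => hp.1 (h.2 p hpu)
    simp [Tin, this]
  have t4 : Tin u (insert p I) = if w ∈ I then 1 else 0 := by
    by_cases hwI : w ∈ I
    · have : CanTogIn (insert p I) u := by
        refine ⟨huins, fun r hr => ?_⟩
        obtain ⟨hr1, hr2, hrs, hr1n, hr2n⟩ := bounds r
        have hrco := (lt_iff r u).mp hr
        by_cases hc : r.1.1.val ≤ p.1.1.val
        · have hrp : r ≤ p := by rw [le_iff]; omega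
          rcases eq_or_lt_of_le hrp with h | h
          · rw [h]; exact mem_insert_self p I
          · exact mem_insert_of_mem (hp.2 r h)
        · have hrw : r ≤ w := by rw [le_iff]; omega
          exact mem_insert_of_mem (hI hrw hwI)
      simp [Tin, this, hwI]
    · have hwu : w < u := by rw [lt_iff]; omega
      have : ¬ CanTogIn (insert p I) u := by
        rintro ⟨-, hall⟩
        rcases mem_insert.mp (hall w hwu) with h | h
        · rw [eq_iff] at h; omega
        · exact hwI h
      simp [Tin, this, hwI]
  rw [Tsgn, Tsgn, t1, t2, t3, t4]; ring

/-- Change at lower cover `l = (i, j-1)`, with `w = (i+1, j-1)`, when `i < n`, `2 ≤ j`. -/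
lemma tsgn_l2 (hI : IsIdeal I) (hp : CanTogIn I p) {l w : RootA n}
    (hl : l.1.1.val = p.1.1.val ∧ l.1.2.val = p.1.2.val - 1)
    (hw : w.1.1.val = p.1.1.val + 1 ∧ w.1.2.val = p.1.2.val - 1)
    (hj : 2 ≤ p.1.2.val) :
    Tsgn l (insert p I) - Tsgn l I = if w ∈ I then 0 else 1 := by
  obtain ⟨hp1, hp2, hps, hp1n, hp2n⟩ := bounds p
  have hlp : l < p := by rw [lt_iff]; omega
  have hlI : l ∈ I := hp.2 l hlp
  have t1 : Tin l I = 0 := by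
    have : ¬ CanTogIn I l := fun h => h.1 hlI
    simp [Tin, this]
  have t2 : Tin l (insert p I) = 0 := by
    have : ¬ CanTogIn (insert p I) l := fun h => h.1 (mem_insert_of_mem hlI)
    simp [Tin, this]
  have t3 : Tout l (insert p I) = 0 := by
    have : ¬ CanTogOut (insert p I) l := fun h => h.2 p hlp (mem_insert_self p I)
    simp [Tout, this]
  have t4 : Tout l I = if w ∈ I then 0 else 1 := by
    by_cases hwI : w ∈ I
    · have hlw : l < w := by rw [lt_iff]; omega
      have : ¬ CanTogOut I l := fun h => h.2 w hlw hwI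
      simp [Tout, this, hwI]
    · have : CanTogOut I l := by
        refine ⟨hlI, fun r hr hrI => ?_⟩
        obtain ⟨hr1, hr2, hrs, hr1n, hr2n⟩ := bounds r
        have hrco := (lt_iff l r).mp hr
        by_cases hc : p.1.1.val + 1 ≤ r.1.1.val
        · have hwr : w ≤ r := by rw [le_iff]; omega
          exact hwI (hI hwr hrI)
        · have hpr : p ≤ r := by rw [le_iff]; omega
          exact hp.1 (hI hpr hrI)
      simp [Tout, this, hwI]
  rw [Tsgn, Tsgn, t1, t2, t3, t4]; ring

/-- Change at lower cover `l = (i, j-1)` when `i = n` (no `w`). -/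
lemma tsgn_l2_top (hI : IsIdeal I) (hp : CanTogIn I p) {l : RootA n}
    (hl : l.1.1.val = p.1.1.val ∧ l.1.2.val = p.1.2.val - 1)
    (hj : 2 ≤ p.1.2.val) (hi : p.1.1.val = n) :
    Tsgn l (insert p I) - Tsgn l I = 1 := by
  obtain ⟨hp1, hp2, hps, hp1n, hp2n⟩ := bounds p
  have hlp : l < p := by rw [lt_iff]; omega
  have hlI : l ∈ I := hp.2 l hlp
  have t1 : Tin l I = 0 := by
    have : ¬ CanTogIn I l := fun h => h.1 hlI
    simp [Tin, this]
  have t2 : Tin l (insert p I) = 0 := by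
    have : ¬ CanTogIn (insert p I) l := fun h => h.1 (mem_insert_of_mem hlI)
    simp [Tin, this]
  have t3 : Tout l (insert p I) = 0 := by
    have : ¬ CanTogOut (insert p I) l := fun h => h.2 p hlp (mem_insert_self p I)
    simp [Tout, this]
  have t4 : Tout l I = 1 := by
    have : CanTogOut I l := by
      refine ⟨hlI, fun r hr hrI => ?_⟩
      obtain ⟨hr1, hr2, hrs, hr1n, hr2n⟩ := bounds r
      have hrco := (lt_iff l r).mp hr
      have hpr : p ≤ r := by rw [le_iff]; omega
      exact hp.1 (hI hpr hrI)
    simp [Tout, this]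
  rw [Tsgn, Tsgn, t1, t2, t3, t4]; ring

/-- Change at upper cover `u = (i, j+1)`, with `w = (i-1, j+1)`, mirror of `tsgn_u1`. -/
lemma tsgn_u2 (hI : IsIdeal I) (hp : CanTogIn I p) {u w : RootA n}
    (hu : u.1.1.val = p.1.1.val ∧ u.1.2.val = p.1.2.val + 1)
    (hw : w.1.1.val = p.1.1.val - 1 ∧ w.1.2.val = p.1.2.val + 1)
    (hj : 2 ≤ p.1.1.val) :
    Tsgn u (insert p I) - Tsgn u I = if w ∈ I then 1 else 0 := by
  obtain ⟨hp1, hp2, hps, hp1n, hp2n⟩ := bounds p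
  have hpu : p < u := by rw [lt_iff]; omega
  have hune : u ≠ p := by rw [Ne, eq_iff]; omega
  have huI : u ∉ I := fun h => hp.1 (hI (le_of_lt hpu) h)
  have huins : u ∉ insert p I := by
    rw [mem_insert]; push_neg; exact ⟨hune, huI⟩
  have t1 : Tout u I = 0 := by simp [Tout, CanTogOut, huI]
  have t2 : Tout u (insert p I) = 0 := by simp [Tout, CanTogOut, huins]
  have t3 : Tin u I = 0 := by
    have : ¬ CanTogIn I u := fun h => hp.1 (h.2 p hpu)
    simp [Tin, this]
  have t4 : Tin u (insert p I) = if w ∈ I then 1 else 0 := by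
    by_cases hwI : w ∈ I
    · have : CanTogIn (insert p I) u := by
        refine ⟨huins, fun r hr => ?_⟩
        obtain ⟨hr1, hr2, hrs, hr1n, hr2n⟩ := bounds r
        have hrco := (lt_iff r u).mp hr
        by_cases hc : r.1.2.val ≤ p.1.2.val
        · have hrp : r ≤ p := by rw [le_iff]; omega
          rcases eq_or_lt_of_le hrp with h | h
          · rw [h]; exact mem_insert_self p I
          · exact mem_insert_of_mem (hp.2 r h)
        · have hrw : r ≤ w := by rw [le_iff]; omega
          exact mem_insert_of_mem (hI hrw hwI)
      simp [Tin, this, hwI]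
    · have hwu : w < u := by rw [lt_iff]; omega
      have : ¬ CanTogIn (insert p I) u := by
        rintro ⟨-, hall⟩
        rcases mem_insert.mp (hall w hwu) with h | h
        · rw [eq_iff] at h; omega
        · exact hwI h
      simp [Tin, this, hwI]
  rw [Tsgn, Tsgn, t1, t2, t3, t4]; ring

/-- Change at lower cover `l = (i-1, j)`, with `w = (i-1, j+1)`, mirror of `tsgn_l2`. -/
lemma tsgn_l1 (hI : IsIdeal I) (hp : CanTogIn I p) {l w : RootA n}
    (hl : l.1.1.val = p.1.1.val - 1 ∧ l.1.2.val = p.1.2.val)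
    (hw : w.1.1.val = p.1.1.val - 1 ∧ w.1.2.val = p.1.2.val + 1)
    (hj : 2 ≤ p.1.1.val) :
    Tsgn l (insert p I) - Tsgn l I = if w ∈ I then 0 else 1 := by
  obtain ⟨hp1, hp2, hps, hp1n, hp2n⟩ := bounds p
  have hlp : l < p := by rw [lt_iff]; omega
  have hlI : l ∈ I := hp.2 l hlp
  have t1 : Tin l I = 0 := by
    have : ¬ CanTogIn I l := fun h => h.1 hlI
    simp [Tin, this]
  have t2 : Tin l (insert p I) = 0 := by
    have : ¬ CanTogIn (insert p I) l := fun h => h.1 (mem_insert_of_mem hlI)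
    simp [Tin, this]
  have t3 : Tout l (insert p I) = 0 := by
    have : ¬ CanTogOut (insert p I) l := fun h => h.2 p hlp (mem_insert_self p I)
    simp [Tout, this]
  have t4 : Tout l I = if w ∈ I then 0 else 1 := by
    by_cases hwI : w ∈ I
    · have hlw : l < w := by rw [lt_iff]; omega
      have : ¬ CanTogOut I l := fun h => h.2 w hlw hwI
      simp [Tout, this, hwI]
    · have : CanTogOut I l := by
        refine ⟨hlI, fun r hr hrI => ?_⟩
        obtain ⟨hr1, hr2, hrs, hr1n, hr2n⟩ := bounds r
        have hrco := (lt_iff l r).mp hr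
        by_cases hc : p.1.2.val + 1 ≤ r.1.2.val
        · have hwr : w ≤ r := by rw [le_iff]; omega
          exact hwI (hI hwr hrI)
        · have hpr : p ≤ r := by rw [le_iff]; omega
          exact hp.1 (hI hpr hrI)
      simp [Tout, this, hwI]
  rw [Tsgn, Tsgn, t1, t2, t3, t4]; ring

/-- Change at lower cover `l = (i-1, j)` when `j = n` (no `w`). -/
lemma tsgn_l1_top (hI : IsIdeal I) (hp : CanTogIn I p) {l : RootA n}
    (hl : l.1.1.val = p.1.1.val - 1 ∧ l.1.2.val = p.1.2.val)
    (hj : 2 ≤ p.1.1.val) (hi : p.1.2.val = n) :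
    Tsgn l (insert p I) - Tsgn l I = 1 := by
  obtain ⟨hp1, hp2, hps, hp1n, hp2n⟩ := bounds p
  have hlp : l < p := by rw [lt_iff]; omega
  have hlI : l ∈ I := hp.2 l hlp
  have t1 : Tin l I = 0 := by
    have : ¬ CanTogIn I l := fun h => h.1 hlI
    simp [Tin, this]
  have t2 : Tin l (insert p I) = 0 := by
    have : ¬ CanTogIn (insert p I) l := fun h => h.1 (mem_insert_of_mem hlI)
    simp [Tin, this]
  have t3 : Tout l (insert p I) = 0 := by
    have : ¬ CanTogOut (insert p I) l := fun h => h.2 p hlp (mem_insert_self p I)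
    simp [Tout, this]
  have t4 : Tout l I = 1 := by
    have : CanTogOut I l := by
      refine ⟨hlI, fun r hr hrI => ?_⟩
      obtain ⟨hr1, hr2, hrs, hr1n, hr2n⟩ := bounds r
      have hrco := (lt_iff l r).mp hr
      have hpr : p ≤ r := by rw [le_iff]; omega
      exact hp.1 (hI hpr hrI)
    simp [Tout, this]
  rw [Tsgn, Tsgn, t1, t2, t3, t4]; ring

noncomputable def cc (n : ℕ) : RootA n → ℝ :=
  fun q => if (q.1.1.val + q.1.2.val) % 2 = (n + 1) % 2 then (-1/2 : ℝ) else 0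

lemma cc_eq (q : RootA n) (h : (q.1.1.val + q.1.2.val) % 2 = (n + 1) % 2) :
    cc n q = -1/2 := by simp [cc, h]

set_option maxHeartbeats 1000000 in
lemma step (hI : IsIdeal I) (hp : CanTogIn I p) :
    ∑ q : RootA n, cc n q * Tsgn q (insert p I)
      = (∑ q : RootA n, cc n q * Tsgn q I)
        + (-1 : ℝ) ^ (p.1.1.val + p.1.2.val - (n + 1)) := by
  obtain ⟨hp1, hp2, hps, hp1n, hp2n⟩ := bounds p
  have key : ∑ q : RootA n, (cc n q * Tsgn q (insert p I) - cc n q * Tsgn q I)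
      = (-1 : ℝ) ^ (p.1.1.val + p.1.2.val - (n + 1)) := by
    by_cases hpar : (p.1.1.val + p.1.2.val) % 2 = (n + 1) % 2
    · -- even rank: only q = p contributes
      have hpow : (-1 : ℝ) ^ (p.1.1.val + p.1.2.val - (n + 1)) = 1 :=
        Even.neg_one_pow (Nat.even_iff.mpr (by omega))
      rw [hpow]
      rw [Finset.sum_eq_single p ?h0 (fun h => absurd (mem_univ p) h)]
      · have hd := tsgn_self hI hp
        have hc := cc_eq p hpar
        rw [hc]; linarith [hd]
      case h0 =>
        intro b _ hb
        by_cases hbpar : (b.1.1.val + b.1.2.val) % 2 = (n + 1) % 2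
        · have heq : Tsgn b (insert p I) = Tsgn b I := by
            by_contra hne
            rcases tsgn_change hI hp hb hne with ⟨_, hs⟩ | ⟨_, hs⟩ <;> omega
          rw [heq]; ring
        · have : cc n b = 0 := by simp [cc, hbpar]
          rw [this]; ring
    · -- odd rank
      have hge : n + 2 ≤ p.1.1.val + p.1.2.val := by omega
      have hi2 : 2 ≤ p.1.1.val := by omega
      have hj2 : 2 ≤ p.1.2.val := by omega
      have hpow : (-1 : ℝ) ^ (p.1.1.val + p.1.2.val - (n + 1)) = -1 :=
        Odd.neg_one_pow (Nat.odd_iff.mpr (by omega))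
      rw [hpow]
      obtain ⟨l1, hl1⟩ : ∃ l : RootA n, l.1.1.val = p.1.1.val - 1 ∧ l.1.2.val = p.1.2.val :=
        ⟨rmk n (p.1.1.val - 1) p.1.2.val (by omega), rfl, rfl⟩
      obtain ⟨l2, hl2⟩ : ∃ l : RootA n, l.1.1.val = p.1.1.val ∧ l.1.2.val = p.1.2.val - 1 :=
        ⟨rmk n p.1.1.val (p.1.2.val - 1) (by omega), rfl, rfl⟩
      by_cases hiu : p.1.1.val < n <;> by_cases hju : p.1.2.val < n
      · -- both upper covers exist
        obtain ⟨u1, hu1⟩ : ∃ u : RootA n, u.1.1.val = p.1.1.val + 1 ∧ u.1.2.val = p.1.2.val :=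
          ⟨rmk n (p.1.1.val + 1) p.1.2.val (by omega), rfl, rfl⟩
        obtain ⟨u2, hu2⟩ : ∃ u : RootA n, u.1.1.val = p.1.1.val ∧ u.1.2.val = p.1.2.val + 1 :=
          ⟨rmk n p.1.1.val (p.1.2.val + 1) (by omega), rfl, rfl⟩
        obtain ⟨w1, hw1⟩ : ∃ w : RootA n, w.1.1.val = p.1.1.val + 1 ∧ w.1.2.val = p.1.2.val - 1 :=
          ⟨rmk n (p.1.1.val + 1) (p.1.2.val - 1) (by omega), rfl, rfl⟩
        obtain ⟨w2, hw2⟩ : ∃ w : RootA n, w.1.1.val = p.1.1.val - 1 ∧ w.1.2.val = p.1.2.val + 1 :=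
          ⟨rmk n (p.1.1.val - 1) (p.1.2.val + 1) (by omega), rfl, rfl⟩
        have hsub := Finset.sum_subset (Finset.subset_univ ({u1, u2, l1, l2} : Finset (RootA n)))
          (f := fun q => cc n q * Tsgn q (insert p I) - cc n q * Tsgn q I) ?van
        case van =>
          intro q _ hqK
          show cc n q * Tsgn q (insert p I) - cc n q * Tsgn q I = 0
          by_cases hqpar : (q.1.1.val + q.1.2.val) % 2 = (n + 1) % 2
          · have hqp : q ≠ p := by rw [Ne, eq_iff]; omega
            have heq : Tsgn q (insert p I) = Tsgn q I := by
              by_contra hne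
              obtain ⟨hq1, hq2, hqs, hq1n, hq2n⟩ := bounds q
              rcases tsgn_change hI hp hqp hne with ⟨hle, hs⟩ | ⟨hle, hs⟩ <;> rw [le_iff] at hle
              · have : q = u1 ∨ q = u2 := by
                  by_cases hq : q.1.1.val = p.1.1.val + 1
                  · left; rw [eq_iff]; omega
                  · right; rw [eq_iff]; omega
                rcases this with rfl | rfl <;> simp at hqK
              · have : q = l1 ∨ q = l2 := by
                  by_cases hq : q.1.1.val = p.1.1.val - 1
                  · left; rw [eq_iff]; omega
                  · right; rw [eq_iff]; omega
                rcases this with rfl | rfl <;> simp at hqK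
            rw [heq]; ring
          · have : cc n q = 0 := by simp [cc, hqpar]
            rw [this]; ring
        rw [← hsub]
        have hne12 : u1 ∉ ({u2, l1, l2} : Finset (RootA n)) := by
          simp only [mem_insert, mem_singleton]
          push_neg
          refine ⟨?_, ?_, ?_⟩ <;> (intro hco; rw [eq_iff] at hco; omega)
        have hne23 : u2 ∉ ({l1, l2} : Finset (RootA n)) := by
          simp only [mem_insert, mem_singleton]
          push_neg
          refine ⟨?_, ?_⟩ <;> (intro hco; rw [eq_iff] at hco; omega)
        have hne34 : l1 ∉ ({l2} : Finset (RootA n)) := by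
          simp only [mem_singleton]
          intro hco; rw [eq_iff] at hco; omega
        rw [Finset.sum_insert hne12, Finset.sum_insert hne23, Finset.sum_insert hne34,
          Finset.sum_singleton]
        have d1 := tsgn_u1 hI hp hu1 hw1 hj2
        have d2 := tsgn_l2 hI hp hl2 hw1 hj2
        have d3 := tsgn_u2 hI hp hu2 hw2 hi2
        have d4 := tsgn_l1 hI hp hl1 hw2 hi2
        have c1 : cc n u1 = -1/2 := cc_eq u1 (by omega)
        have c2 : cc n u2 = -1/2 := cc_eq u2 (by omega)
        have c3 : cc n l1 = -1/2 := cc_eq l1 (by omega)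
        have c4 : cc n l2 = -1/2 := cc_eq l2 (by omega)
        rw [c1, c2, c3, c4]
        by_cases hw1I : w1 ∈ I <;> by_cases hw2I : w2 ∈ I <;>
          simp only [hw1I, hw2I, if_true, if_false] at d1 d2 d3 d4 <;> linarith
      · -- u1 exists, u2 does not (j = n)
        obtain ⟨u1, hu1⟩ : ∃ u : RootA n, u.1.1.val = p.1.1.val + 1 ∧ u.1.2.val = p.1.2.val :=
          ⟨rmk n (p.1.1.val + 1) p.1.2.val (by omega), rfl, rfl⟩
        obtain ⟨w1, hw1⟩ : ∃ w : RootA n, w.1.1.val = p.1.1.val + 1 ∧ w.1.2.val = p.1.2.val - 1 :=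
          ⟨rmk n (p.1.1.val + 1) (p.1.2.val - 1) (by omega), rfl, rfl⟩
        have hjn : p.1.2.val = n := by omega
        have hsub := Finset.sum_subset (Finset.subset_univ ({u1, l1, l2} : Finset (RootA n)))
          (f := fun q => cc n q * Tsgn q (insert p I) - cc n q * Tsgn q I) ?van
        case van =>
          intro q _ hqK
          show cc n q * Tsgn q (insert p I) - cc n q * Tsgn q I = 0
          by_cases hqpar : (q.1.1.val + q.1.2.val) % 2 = (n + 1) % 2
          · have hqp : q ≠ p := by rw [Ne, eq_iff]; omega
            have heq : Tsgn q (insert p I) = Tsgn q I := by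
              by_contra hne
              obtain ⟨hq1, hq2, hqs, hq1n, hq2n⟩ := bounds q
              rcases tsgn_change hI hp hqp hne with ⟨hle, hs⟩ | ⟨hle, hs⟩ <;> rw [le_iff] at hle
              · have : q = u1 := by rw [eq_iff]; omega
                subst this; simp at hqK
              · have : q = l1 ∨ q = l2 := by
                  by_cases hq : q.1.1.val = p.1.1.val - 1
                  · left; rw [eq_iff]; omega
                  · right; rw [eq_iff]; omega
                rcases this with rfl | rfl <;> simp at hqK
            rw [heq]; ring
          · have : cc n q = 0 := by simp [cc, hqpar]
            rw [this]; ring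
        rw [← hsub]
        have hne12 : u1 ∉ ({l1, l2} : Finset (RootA n)) := by
          simp only [mem_insert, mem_singleton]
          push_neg
          refine ⟨?_, ?_⟩ <;> (intro hco; rw [eq_iff] at hco; omega)
        have hne34 : l1 ∉ ({l2} : Finset (RootA n)) := by
          simp only [mem_singleton]
          intro hco; rw [eq_iff] at hco; omega
        rw [Finset.sum_insert hne12, Finset.sum_insert hne34, Finset.sum_singleton]
        have d1 := tsgn_u1 hI hp hu1 hw1 hj2
        have d2 := tsgn_l2 hI hp hl2 hw1 hj2
        have d4 := tsgn_l1_top hI hp hl1 hi2 hjn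
        have c1 : cc n u1 = -1/2 := cc_eq u1 (by omega)
        have c3 : cc n l1 = -1/2 := cc_eq l1 (by omega)
        have c4 : cc n l2 = -1/2 := cc_eq l2 (by omega)
        rw [c1, c3, c4]
        by_cases hw1I : w1 ∈ I <;>
          simp only [hw1I, if_true, if_false] at d1 d2 <;> linarith
      · -- u2 exists, u1 does not (i = n)
        obtain ⟨u2, hu2⟩ : ∃ u : RootA n, u.1.1.val = p.1.1.val ∧ u.1.2.val = p.1.2.val + 1 :=
          ⟨rmk n p.1.1.val (p.1.2.val + 1) (by omega), rfl, rfl⟩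
        obtain ⟨w2, hw2⟩ : ∃ w : RootA n, w.1.1.val = p.1.1.val - 1 ∧ w.1.2.val = p.1.2.val + 1 :=
          ⟨rmk n (p.1.1.val - 1) (p.1.2.val + 1) (by omega), rfl, rfl⟩
        have hin : p.1.1.val = n := by omega
        have hsub := Finset.sum_subset (Finset.subset_univ ({u2, l1, l2} : Finset (RootA n)))
          (f := fun q => cc n q * Tsgn q (insert p I) - cc n q * Tsgn q I) ?van
        case van =>
          intro q _ hqK
          show cc n q * Tsgn q (insert p I) - cc n q * Tsgn q I = 0
          by_cases hqpar : (q.1.1.val + q.1.2.val) % 2 = (n + 1) % 2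
          · have hqp : q ≠ p := by rw [Ne, eq_iff]; omega
            have heq : Tsgn q (insert p I) = Tsgn q I := by
              by_contra hne
              obtain ⟨hq1, hq2, hqs, hq1n, hq2n⟩ := bounds q
              rcases tsgn_change hI hp hqp hne with ⟨hle, hs⟩ | ⟨hle, hs⟩ <;> rw [le_iff] at hle
              · have : q = u2 := by rw [eq_iff]; omega
                subst this; simp at hqK
              · have : q = l1 ∨ q = l2 := by
                  by_cases hq : q.1.1.val = p.1.1.val - 1
                  · left; rw [eq_iff]; omega
                  · right; rw [eq_iff]; omega
                rcases this with rfl | rfl <;> simp at hqK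
            rw [heq]; ring
          · have : cc n q = 0 := by simp [cc, hqpar]
            rw [this]; ring
        rw [← hsub]
        have hne12 : u2 ∉ ({l1, l2} : Finset (RootA n)) := by
          simp only [mem_insert, mem_singleton]
          push_neg
          refine ⟨?_, ?_⟩ <;> (intro hco; rw [eq_iff] at hco; omega)
        have hne34 : l1 ∉ ({l2} : Finset (RootA n)) := by
          simp only [mem_singleton]
          intro hco; rw [eq_iff] at hco; omega
        rw [Finset.sum_insert hne12, Finset.sum_insert hne34, Finset.sum_singleton]
        have d3 := tsgn_u2 hI hp hu2 hw2 hi2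
        have d4 := tsgn_l1 hI hp hl1 hw2 hi2
        have d2 := tsgn_l2_top hI hp hl2 hj2 hin
        have c2 : cc n u2 = -1/2 := cc_eq u2 (by omega)
        have c3 : cc n l1 = -1/2 := cc_eq l1 (by omega)
        have c4 : cc n l2 = -1/2 := cc_eq l2 (by omega)
        rw [c2, c3, c4]
        by_cases hw2I : w2 ∈ I <;>
          simp only [hw2I, if_true, if_false] at d3 d4 <;> linarith
      · -- i = n and j = n
        have hin : p.1.1.val = n := by omega
        have hjn : p.1.2.val = n := by omega
        have hsub := Finset.sum_subset (Finset.subset_univ ({l1, l2} : Finset (RootA n)))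
          (f := fun q => cc n q * Tsgn q (insert p I) - cc n q * Tsgn q I) ?van
        case van =>
          intro q _ hqK
          show cc n q * Tsgn q (insert p I) - cc n q * Tsgn q I = 0
          by_cases hqpar : (q.1.1.val + q.1.2.val) % 2 = (n + 1) % 2
          · have hqp : q ≠ p := by rw [Ne, eq_iff]; omega
            have heq : Tsgn q (insert p I) = Tsgn q I := by
              by_contra hne
              obtain ⟨hq1, hq2, hqs, hq1n, hq2n⟩ := bounds q
              rcases tsgn_change hI hp hqp hne with ⟨hle, hs⟩ | ⟨hle, hs⟩ <;> rw [le_iff] at hle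
              · omega
              · have : q = l1 ∨ q = l2 := by
                  by_cases hq : q.1.1.val = p.1.1.val - 1
                  · left; rw [eq_iff]; omega
                  · right; rw [eq_iff]; omega
                rcases this with rfl | rfl <;> simp at hqK
            rw [heq]; ring
          · have : cc n q = 0 := by simp [cc, hqpar]
            rw [this]; ring
        rw [← hsub]
        have hne34 : l1 ∉ ({l2} : Finset (RootA n)) := by
          simp only [mem_singleton]
          intro hco; rw [eq_iff] at hco; omega
        rw [Finset.sum_insert hne34, Finset.sum_singleton]
        have d2 := tsgn_l2_top hI hp hl2 hj2 hin
        have d4 := tsgn_l1_top hI hp hl1 hi2 hjn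
        have c3 : cc n l1 = -1/2 := cc_eq l1 (by omega)
        have c4 : cc n l2 = -1/2 := cc_eq l2 (by omega)
        rw [c3, c4]
        linarith
  rw [Finset.sum_sub_distrib] at key
  linarith

lemma canTogIn_empty (q : RootA n) :
    CanTogIn (∅ : Finset (RootA n)) q ↔ q.1.1.val + q.1.2.val = n + 1 := by
  obtain ⟨hq1, hq2, hqs, hq1n, hq2n⟩ := bounds q
  constructor
  · rintro ⟨-, hall⟩
    by_contra h
    have hr : (rmk n (q.1.1.val - 1) q.1.2.val (by omega)) < q := by
      rw [lt_iff]; simp only [rmk_i, rmk_j]; omega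
    exact absurd (hall _ hr) (notMem_empty _)
  · intro h
    refine ⟨notMem_empty q, fun r hr => ?_⟩
    exfalso
    obtain ⟨hr1, hr2, hrs, hr1n, hr2n⟩ := bounds r
    have := (lt_iff r q).mp hr
    omega

lemma card_min : (univ.filter fun q : RootA n => q.1.1.val + q.1.2.val = n + 1).card = n := by
  have h : (univ.filter fun q : RootA n => q.1.1.val + q.1.2.val = n + 1).card
      = (Finset.range n).card := by
    refine Finset.card_bij' (fun q _ => q.1.1.val - 1)
      (fun a ha => rmk n (a + 1) (n - a)
        (by simp only [Finset.mem_range] at ha; omega)) ?_ ?_ ?_ ?_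
    · intro q hq
      simp only [Finset.mem_filter] at hq
      obtain ⟨hq1, hq2, hqs, hq1n, hq2n⟩ := bounds q
      simp only [Finset.mem_range]; omega
    · intro a ha
      simp only [Finset.mem_range] at ha
      simp only [Finset.mem_filter, rmk_i, rmk_j]
      exact ⟨mem_univ _, by omega⟩
    · intro q hq
      simp only [Finset.mem_filter] at hq
      obtain ⟨hq1, hq2, hqs, hq1n, hq2n⟩ := bounds q
      rw [eq_iff]; simp only [rmk_i, rmk_j]; omega
    · intro a ha
      simp only [Finset.mem_range] at ha
      simp only [rmk_i]; omega
  rw [h, Finset.card_range]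

lemma main1 : ∀ I : Finset (RootA n), IsIdeal I →
    (∑ p ∈ I, (-1 : ℝ) ^ (p.1.1.val + p.1.2.val - (n + 1)))
      = (n : ℝ) / 2 + ∑ p : RootA n, cc n p * Tsgn p I := by
  intro I
  induction I using Finset.strongInduction with
  | _ I ih =>
    intro hI
    rcases I.eq_empty_or_nonempty with rfl | hne
    · simp only [Finset.sum_empty]
      have hterm : ∀ q : RootA n, cc n q * Tsgn q (∅ : Finset (RootA n))
          = if q.1.1.val + q.1.2.val = n + 1 then (-1/2 : ℝ) else 0 := by
        intro q
        have hTout : Tout q (∅ : Finset (RootA n)) = 0 := by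
          simp [Tout, CanTogOut]
        by_cases h : q.1.1.val + q.1.2.val = n + 1
        · have hin : CanTogIn (∅ : Finset (RootA n)) q := (canTogIn_empty q).mpr h
          have hcc := cc_eq q (by omega)
          rw [if_pos h, Tsgn, hTout, hcc]
          simp [Tin, hin]
        · have hnin : ¬ CanTogIn (∅ : Finset (RootA n)) q :=
            fun hh => h ((canTogIn_empty q).mp hh)
          rw [if_neg h, Tsgn, hTout]
          simp [Tin, hnin]
      rw [Finset.sum_congr rfl (fun q _ => hterm q), ← Finset.sum_filter,
        Finset.sum_const, card_min]
      simp only [nsmul_eq_mul]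
      ring
    · obtain ⟨p, hpI, hpmax⟩ : ∃ p ∈ I, ∀ x ∈ I, ¬ p < x := by
        obtain ⟨p, hp⟩ := Finset.exists_maximal hne
        exact ⟨p, hp.1, fun x hx hlt => not_le_of_gt hlt (hp.2 hx hlt.le)⟩
      have hI' : IsIdeal (I.erase p) := by
        intro x y hxy hy
        have hyI : y ∈ I := mem_of_mem_erase hy
        have hxI : x ∈ I := hI hxy hyI
        rw [mem_erase]
        refine ⟨fun hxp => ?_, hxI⟩
        subst hxp
        rcases eq_or_lt_of_le hxy with rfl | hlt
        · exact (mem_erase.mp hy).1 rfl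
        · exact hpmax y hyI hlt
      have hct : CanTogIn (I.erase p) p := by
        refine ⟨notMem_erase p I, fun r hr => ?_⟩
        rw [mem_erase]
        exact ⟨ne_of_lt hr, hI (le_of_lt hr) hpI⟩
      have hins : insert p (I.erase p) = I := insert_erase hpI
      have hstep := step hI' hct
      rw [hins] at hstep
      have hih := ih (I.erase p) (erase_ssubset hpI) hI'
      have hsum : (∑ q ∈ I, (-1 : ℝ) ^ (q.1.1.val + q.1.2.val - (n + 1)))
          = (∑ q ∈ I.erase p, (-1 : ℝ) ^ (q.1.1.val + q.1.2.val - (n + 1)))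
            + (-1 : ℝ) ^ (p.1.1.val + p.1.2.val - (n + 1)) := by
        conv_lhs => rw [← hins]
        rw [Finset.sum_insert (notMem_erase p I)]
        ring
      rw [hsum, hih]
      linarith [hstep]

end RootAProof

/-- On the Type `A_n` root poset with rank `rk(i,j) = i+j-(n+1)`, the rank-alternating
order ideal cardinality statistic `I ↦ ∑_{p∈I} (-1)^{rk p}` is `n/2` plus a linear
combination of signed toggleability statistics; hence its average along every
rowmotion orbit is `n/2`. -/
theorem rootA_rank_alternating_homomesy (n : ℕ) (hn : 1 ≤ n) :
    ∃ c : RootA n → ℝ,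
      (∀ I : Finset (RootA n), IsIdeal I →
        (∑ p ∈ I, (-1 : ℝ) ^ (p.1.1.val + p.1.2.val - (n + 1)))
          = (n : ℝ) / 2 + ∑ p : RootA n, c p * Tsgn p I) ∧
      (∀ I : Finset (RootA n), IsIdeal I → ∀ N : ℕ, 0 < N → rowmotion^[N] I = I →
        ∑ k ∈ Finset.range N,
            (∑ p ∈ rowmotion^[k] I, (-1 : ℝ) ^ (p.1.1.val + p.1.2.val - (n + 1)))
          = N * ((n : ℝ) / 2)) := by
  refine ⟨RootAProof.cc n, fun I hI => RootAProof.main1 I hI, ?_⟩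
  intro I hI N hN hper
  have hIdeal : ∀ k, IsIdeal (rowmotion^[k] I) := by
    intro k
    cases k with
    | zero => exact hI
    | succ m => rw [Function.iterate_succ_apply']; exact rowmotion_isIdeal _
  have hmain : ∀ k, (∑ p ∈ rowmotion^[k] I, (-1 : ℝ) ^ (p.1.1.val + p.1.2.val - (n + 1)))
      = (n : ℝ) / 2 + ∑ p : RootA n, RootAProof.cc n p * Tsgn p (rowmotion^[k] I) :=
    fun k => RootAProof.main1 _ (hIdeal k)
  rw [Finset.sum_congr rfl (fun k _ => hmain k), Finset.sum_add_distrib,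
    Finset.sum_const, Finset.card_range, Finset.sum_comm]
  have hzero : ∀ p : RootA n,
      ∑ k ∈ Finset.range N, RootAProof.cc n p * Tsgn p (rowmotion^[k] I) = 0 := by
    intro p
    rw [← Finset.mul_sum, sum_Tsgn_orbit I p N hper, mul_zero]
  rw [Finset.sum_congr rfl (fun p _ => hzero p), Finset.sum_const_zero]
  simp [nsmul_eq_mul]
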